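/- Let X be an infinite dimensional separable complex Banach space and T a quasinilpotent bounded linear operator on X. Then T has a nontrivial closed invariant subspace if and only if for some (equivalently, for every) a, c ∈ ℂ and b ∈ ℂ \ {0}, the operator aT² + bT + cI has a nontrivial closed invariant subspace. -/

import Mathlib

/-- `T` has a nontrivial closed invariant subspace. -/
def HasNontrivialClosedInvariantSubspace {E : Type*} [NormedAddCommGroup E]
    [NormedSpace ℂ E] (T : E →L[ℂ] E) : Prop :=
  ∃ M : Submodule ℂ E, IsClosed (M : Set E) ∧ M ≠ ⊥ ∧ M ≠ ⊤ ∧ ∀ x ∈ M, T x ∈ M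

/-!
Put `U = a T² + b T`. As `T` is quasinilpotent and commutes with `a T + b`, the element
`x = -(a / b²) U = T · (-(a / b²) (a T + b))` is quasinilpotent, so the Catalan series
`g = ∑ Cₖ xᵏ` converges in the closed algebra generated by `U` and satisfies `g = 1 + x g²`.
Then `V = b⁻¹ U g` solves `a V² + b V = U`, i.e. `(T - V) (b + a (T + V)) = 0`. Since `T + V` is
`T` times an element commuting with `T`, it is quasinilpotent, so `b + a (T + V)` is invertible
and `T = V`. Hence `T` lies in the closed unital algebra generated by `U + c`, and every closed
subspace invariant under `U + c` is invariant under `T`.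
-/

open Filter Finset

theorem catalan_le_four_pow (n : ℕ) : catalan n ≤ 4 ^ n :=
  calc catalan n ≤ (n + 1) * catalan n := Nat.le_mul_of_pos_left _ n.succ_pos
    _ = n.centralBinom := succ_mul_catalan_eq_centralBinom n
    _ ≤ 4 ^ n := Nat.centralBinom_le_four_pow n

theorem tsum_catalan_mul_pow_eq_one_add_mul_sq {R : Type*} [NormedRing R] [CompleteSpace R]
    {x : R} (hx : Summable fun k => ‖(catalan k : R) * x ^ k‖) :
    ∑' k, (catalan k : R) * x ^ k = 1 + x * (∑' k, (catalan k : R) * x ^ k) ^ 2 := by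
  set f : ℕ → R := fun k => (catalan k : R) * x ^ k
  have hcauchy : ∀ n, ∑ kl ∈ antidiagonal n, f kl.1 * f kl.2 = (catalan (n + 1) : R) * x ^ n := by
    intro n
    rw [catalan_succ', Nat.cast_sum, Finset.sum_mul]
    refine Finset.sum_congr rfl fun kl hkl => ?_
    rw [← mem_antidiagonal.mp hkl, pow_add, Nat.cast_mul]
    simp only [f, mul_assoc, ((Nat.cast_commute _ _).symm.left_comm _ : x ^ kl.1 * _ = _)]
  have hsq : (∑' k, f k) ^ 2 = ∑' n, (catalan (n + 1) : R) * x ^ n := by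
    rw [sq, tsum_mul_tsum_eq_tsum_sum_antidiagonal_of_summable_norm hx hx]
    exact tsum_congr hcauchy
  have hsq_summable : Summable fun n => (catalan (n + 1) : R) * x ^ n :=
    (summable_norm_sum_mul_antidiagonal_of_summable_norm hx hx).of_norm.congr hcauchy
  calc ∑' k, f k = f 0 + ∑' n, f (n + 1) := hx.of_norm.tsum_eq_zero_add
    _ = 1 + x * (∑' k, f k) ^ 2 := by
      rw [hsq, ← hsq_summable.tsum_mul_left]
      congr 1
      · simp [f]
      · refine tsum_congr fun n => ?_
        simp only [f, pow_succ', ← mul_assoc, Nat.cast_comm]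

theorem Commute.of_mem_elemental {R A : Type*} [CommSemiring R] [Semiring A] [Algebra R A]
    [TopologicalSpace A] [IsSemitopologicalSemiring A] [T2Space A] {x y z : A}
    (hyx : Commute y x) (hz : z ∈ Algebra.elemental R x) : Commute y z := by
  have hy : y ∈ Subalgebra.centralizer R {x} := by
    simpa [Subalgebra.mem_centralizer_iff] using hyx.symm.eq
  exact ((Subalgebra.mem_centralizer_iff R).mp
    (Subalgebra.topologicalClosure_adjoin_le_centralizer_centralizer R {x} hz) y hy)

theorem Algebra.elemental.mem_add_smul_one {R A : Type*} [CommRing R] [Ring A] [Algebra R A]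
    [TopologicalSpace A] [IsTopologicalRing A] (x : A) (c : R) :
    x ∈ Algebra.elemental R (x + c • 1) := by
  simpa using sub_mem (self_mem R (x + c • 1)) (Subalgebra.smul_mem _ (one_mem _) c)

theorem tsum_mem_elemental {R A : Type*} [CommSemiring R] [Ring A] [Algebra R A]
    [TopologicalSpace A] [IsTopologicalRing A] [T2Space A] {x : A} {f : ℕ → A}
    (hf : Summable f) (hmem : ∀ k, f k ∈ Algebra.adjoin R {x}) :
    ∑' k, f k ∈ Algebra.elemental R x :=
  (Algebra.elemental.isClosed R x).mem_of_tendsto hf.hasSum.tendsto_sum_nat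
    (Eventually.of_forall fun _ => Subalgebra.le_topologicalClosure _ (sum_mem fun k _ => hmem k))

namespace spectrum

variable {A : Type*} [NormedRing A] [NormedAlgebra ℂ A] {x y : A}

theorem eq_of_smul_sq_add_smul_eq (hxy : Commute x y) (hxy₀ : spectralRadius ℂ (x + y) = 0)
    {a b : ℂ} (hb : b ≠ 0) (h : a • x ^ 2 + b • x = a • y ^ 2 + b • y) : x = y := by
  have hunit : IsUnit (1 - (-(a / b)) • (x + y)) :=
    isUnit_one_sub_smul_of_lt_inv_radius (by simp [hxy₀])
  have hsq : (x - y) * (x + y) = x ^ 2 - y ^ 2 := by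
    rw [mul_add, sub_mul, sub_mul, hxy.eq, sq, sq]; abel
  have hfactor : (x - y) * (1 - (-(a / b)) • (x + y)) =
      b⁻¹ • (a • x ^ 2 + b • x - (a • y ^ 2 + b • y)) := by
    rw [mul_sub, mul_one, mul_smul_comm, hsq]
    match_scalars <;> field_simp
  rw [← sub_eq_zero, ← hunit.mul_left_eq_zero, hfactor, h, sub_self, smul_zero]

variable [CompleteSpace A]

theorem spectralRadius_eq_zero_iff_eventually_norm_pow_le :
    spectralRadius ℂ x = 0 ↔ ∀ r : ℝ, 0 < r → ∀ᶠ n in atTop, ‖x ^ n‖ ≤ r ^ n := by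
  have key : ∀ r : ℝ, 0 < r → ∀ n : ℕ, n ≠ 0 →
      (ENNReal.ofReal (‖x ^ n‖ ^ (1 / n : ℝ)) ≤ ENNReal.ofReal r ↔ ‖x ^ n‖ ≤ r ^ n) := by
    intro r hr n hn
    rw [ENNReal.ofReal_le_ofReal_iff hr.le, one_div,
      Real.rpow_inv_le_iff_of_pos (norm_nonneg _) hr.le (by positivity), Real.rpow_natCast]
  have gelfand := pow_norm_pow_one_div_tendsto_nhds_spectralRadius x
  constructor
  · intro hx r hr
    rw [hx] at gelfand
    filter_upwards [gelfand.eventually_lt_const (ENNReal.ofReal_pos.mpr hr), eventually_ne_atTop 0]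
      with n hn hn0
    exact (key r hr n hn0).mp hn.le
  · intro h
    refine le_antisymm (ENNReal.le_of_forall_pos_le_add fun ε hε _ => ?_) bot_le
    refine le_of_tendsto gelfand ?_
    filter_upwards [h ε hε, eventually_ne_atTop 0] with n hn hn0
    simpa using (key ε hε n hn0).mpr hn

theorem spectralRadius_mul_eq_zero_of_commute (hxy : Commute x y) (hx : spectralRadius ℂ x = 0) :
    spectralRadius ℂ (x * y) = 0 := by
  rw [spectralRadius_eq_zero_iff_eventually_norm_pow_le] at hx ⊢
  intro r hr
  have hy : 0 < ‖y‖ + 1 := by positivity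
  filter_upwards [hx (r / (‖y‖ + 1)) (by positivity), eventually_ne_atTop 0] with n hn hn0
  calc ‖(x * y) ^ n‖ ≤ ‖x ^ n‖ * ‖y ^ n‖ := by rw [hxy.mul_pow]; exact norm_mul_le _ _
    _ ≤ (r / (‖y‖ + 1)) ^ n * (‖y‖ + 1) ^ n := by
      gcongr
      exact (norm_pow_le' y (Nat.pos_of_ne_zero hn0)).trans (by gcongr; linarith)
    _ = r ^ n := by rw [← mul_pow, div_mul_cancel₀ _ hy.ne']

theorem summable_norm_mul_pow_of_spectralRadius_eq_zero (hx : spectralRadius ℂ x = 0)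
    {c : ℕ → A} {C q : ℝ} (hc : ∀ k, ‖c k‖ ≤ C * q ^ k) :
    Summable fun k => ‖c k * x ^ k‖ := by
  set r := (2 * (|q| + 1))⁻¹
  have hqr : |q * r| < 1 := by
    rw [abs_mul, abs_of_pos (by positivity : 0 < r), ← div_eq_mul_inv, div_lt_one (by positivity)]
    linarith [abs_nonneg q]
  refine Summable.of_norm_bounded_eventually_nat
    ((summable_geometric_of_abs_lt_one hqr).mul_left C) ?_
  filter_upwards [(spectralRadius_eq_zero_iff_eventually_norm_pow_le.mp hx) r (by positivity)]
    with k hk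
  calc ‖‖c k * x ^ k‖‖ ≤ ‖c k‖ * ‖x ^ k‖ := by rw [norm_norm]; exact norm_mul_le _ _
    _ ≤ C * q ^ k * r ^ k := by
      gcongr
      · exact (norm_nonneg _).trans (hc k)
      · exact hc k
    _ = C * (q * r) ^ k := by rw [mul_pow, mul_assoc]

theorem exists_mem_elemental_eq_one_add_mul_sq {x : A} (hx : spectralRadius ℂ x = 0) :
    ∃ g ∈ Algebra.elemental ℂ x, g = 1 + x * g ^ 2 := by
  have hsum : Summable fun k => ‖(catalan k : A) * x ^ k‖ :=
    summable_norm_mul_pow_of_spectralRadius_eq_zero hx (C := ‖(1 : A)‖) (q := 4)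
      fun k => (Nat.norm_cast_le _).trans (by
        rw [mul_comm]; gcongr; exact_mod_cast catalan_le_four_pow k)
  refine ⟨_, tsum_mem_elemental hsum.of_norm fun k => ?_,
    tsum_catalan_mul_pow_eq_one_add_mul_sq hsum⟩
  exact Subalgebra.mul_mem _ (Subalgebra.natCast_mem _ _)
    (Subalgebra.pow_mem _ (Algebra.self_mem_adjoin_singleton ℂ x) k)

theorem mem_elemental_smul_sq_add_smul {T : A} (hT : spectralRadius ℂ T = 0) (a : ℂ) {b : ℂ}
    (hb : b ≠ 0) : T ∈ Algebra.elemental ℂ (a • T ^ 2 + b • T) := by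
  set U := a • T ^ 2 + b • T
  set F := a • T + b • (1 : A)
  have hU : U = T * F := by simp only [U, F, mul_add, mul_smul_comm, mul_one, sq]
  have hTF : Commute T F :=
    ((Commute.refl T).smul_right a).add_right ((Commute.one_right T).smul_right b)
  have hTU : Commute T U := hU ▸ (Commute.refl T).mul_right hTF
  have hx : spectralRadius ℂ ((-(a / b ^ 2)) • U) = 0 := by
    rw [hU, ← mul_smul_comm]
    exact spectralRadius_mul_eq_zero_of_commute (hTF.smul_right _) hT
  obtain ⟨g, hg_mem, hg⟩ := exists_mem_elemental_eq_one_add_mul_sq hx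
  have hTg : Commute T g := (hTU.smul_right _).of_mem_elemental hg_mem
  have hUg : Commute U g := ((Commute.refl U).smul_right _).of_mem_elemental hg_mem
  have hUg' : U * g = U + (-(a / b ^ 2)) • (U ^ 2 * g ^ 2) := by
    conv_lhs => rw [hg]
    rw [mul_add, mul_one, smul_mul_assoc, mul_smul_comm, ← mul_assoc, ← sq]
  set V := b⁻¹ • (U * g)
  have hV : a • V ^ 2 + b • V = U := by
    rw [smul_pow, hUg.mul_pow, smul_smul, smul_smul, mul_inv_cancel₀ hb, one_smul, hUg']
    module
  have hTV : T = V := by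
    have hsum : T + V = T * (1 + b⁻¹ • (F * g)) := by
      rw [mul_add, mul_one, mul_smul_comm, ← mul_assoc, ← hU]
    refine eq_of_smul_sq_add_smul_eq ((hTU.mul_right hTg).smul_right _) ?_ hb hV.symm
    rw [hsum]
    exact spectralRadius_mul_eq_zero_of_commute
      ((Commute.one_right T).add_right ((hTF.mul_right hTg).smul_right _)) hT
  have hg_mem' : g ∈ Algebra.elemental ℂ U :=
    Algebra.elemental.le_of_mem (Algebra.elemental.isClosed ℂ U)
      (Subalgebra.smul_mem _ (Algebra.elemental.self_mem ℂ U) _) hg_mem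
  rw [hTV]
  exact Subalgebra.smul_mem _ (Subalgebra.mul_mem _ (Algebra.elemental.self_mem ℂ U) hg_mem') _

end spectrum

def Submodule.invtSubalgebra {𝕜 E : Type*} [NontriviallyNormedField 𝕜] [NormedAddCommGroup E]
    [NormedSpace 𝕜 E] (M : Submodule 𝕜 E) : Subalgebra 𝕜 (E →L[𝕜] E) where
  carrier := {S | ∀ x ∈ M, S x ∈ M}
  mul_mem' hS hT x hx := hS _ (hT x hx)
  add_mem' hS hT x hx := M.add_mem (hS x hx) (hT x hx)
  algebraMap_mem' c _ hx := M.smul_mem c hx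

theorem Submodule.isClosed_invtSubalgebra {𝕜 E : Type*} [NontriviallyNormedField 𝕜]
    [NormedAddCommGroup E] [NormedSpace 𝕜 E] {M : Submodule 𝕜 E} (hM : IsClosed (M : Set E)) :
    IsClosed (M.invtSubalgebra : Set (E →L[𝕜] E)) := by
  show IsClosed {S : E →L[𝕜] E | ∀ x ∈ M, S x ∈ M}
  simp only [Set.ofPred_forall]
  exact isClosed_iInter fun x => isClosed_iInter fun _ =>
    hM.preimage (ContinuousLinearMap.apply 𝕜 E x).continuous

theorem HasNontrivialClosedInvariantSubspace.of_mem_elemental {E : Type*} [NormedAddCommGroup E]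
    [NormedSpace ℂ E] {S T : E →L[ℂ] E} (hS : HasNontrivialClosedInvariantSubspace S)
    (hT : T ∈ Algebra.elemental ℂ S) : HasNontrivialClosedInvariantSubspace T := by
  obtain ⟨M, hMc, hM0, hMtop, hSM⟩ := hS
  exact ⟨M, hMc, hM0, hMtop,
    Algebra.elemental.le_of_mem (Submodule.isClosed_invtSubalgebra hMc) hSM hT⟩

theorem stmt_8_general {E : Type*} [NormedAddCommGroup E] [NormedSpace ℂ E] [CompleteSpace E]
    (T : E →L[ℂ] E) (hT : spectrum ℂ T = {0}) :
    (HasNontrivialClosedInvariantSubspace T ↔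
      ∃ a c b : ℂ, b ≠ 0 ∧ HasNontrivialClosedInvariantSubspace
        (a • T ^ 2 + b • T + c • (1 : E →L[ℂ] E))) ∧
    (HasNontrivialClosedInvariantSubspace T ↔
      ∀ a c b : ℂ, b ≠ 0 → HasNontrivialClosedInvariantSubspace
        (a • T ^ 2 + b • T + c • (1 : E →L[ℂ] E))) := by
  have hT₀ : spectralRadius ℂ T = 0 := by simp [spectralRadius, hT]
  have hfwd (a c b : ℂ) (h : HasNontrivialClosedInvariantSubspace T) :
      HasNontrivialClosedInvariantSubspace (a • T ^ 2 + b • T + c • (1 : E →L[ℂ] E)) :=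
    h.of_mem_elemental <| add_mem (add_mem
      (Subalgebra.smul_mem _ (pow_mem (Algebra.elemental.self_mem ℂ T) 2) a)
      (Subalgebra.smul_mem _ (Algebra.elemental.self_mem ℂ T) b))
      (Subalgebra.smul_mem _ (one_mem _) c)
  have hbwd (a c b : ℂ) (hb : b ≠ 0)
      (h : HasNontrivialClosedInvariantSubspace (a • T ^ 2 + b • T + c • (1 : E →L[ℂ] E))) :
      HasNontrivialClosedInvariantSubspace T :=
    have hU : a • T ^ 2 + b • T ∈ Algebra.elemental ℂ (a • T ^ 2 + b • T + c • (1 : E →L[ℂ] E)) :=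
      Algebra.elemental.mem_add_smul_one _ c
    (h.of_mem_elemental hU).of_mem_elemental (spectrum.mem_elemental_smul_sq_add_smul hT₀ a hb)
  exact ⟨⟨fun h => ⟨0, 0, 1, one_ne_zero, hfwd 0 0 1 h⟩, fun ⟨a, c, b, hb, h⟩ => hbwd a c b hb h⟩,
    ⟨fun h a c b _ => hfwd a c b h, fun h => hbwd 0 0 1 one_ne_zero (h 0 0 1 one_ne_zero)⟩⟩

theorem stmt_8 {E : Type*} [NormedAddCommGroup E] [NormedSpace ℂ E] [CompleteSpace E]
    [TopologicalSpace.SeparableSpace E] (hdim : ¬ FiniteDimensional ℂ E)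
    (T : E →L[ℂ] E) (hT : spectrum ℂ T = {0}) :
    (HasNontrivialClosedInvariantSubspace T ↔
      ∃ a c b : ℂ, b ≠ 0 ∧ HasNontrivialClosedInvariantSubspace
        (a • T ^ 2 + b • T + c • (1 : E →L[ℂ] E))) ∧
    (HasNontrivialClosedInvariantSubspace T ↔
      ∀ a c b : ℂ, b ≠ 0 → HasNontrivialClosedInvariantSubspace
        (a • T ^ 2 + b • T + c • (1 : E →L[ℂ] E))) :=
  stmt_8_general T hT
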